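/- For a partition λ with at most n rows, the set SVT^n(λ) together with the operators e_i, f_i (1 ≤ i < n) and the weight map wt satisfies the axioms of an abstract U_q(sl_n)-crystal: (1) for T, T' ∈ SVT^n(λ), f_i T = T' if and only if e_i T' = T; (2) if f_i T ≠ 0 then wt(f_i T) = wt(T) − α_i, where α_i ∈ ℤ^n is the vector with 1 in position i, −1 in position i+1, and 0 elsewhere; (3) the quantities ε_i(T) = max{m ≥ 0 : e_i^m T ≠ 0} and φ_i(T) = max{m ≥ 0 : f_i^m T ≠ 0} are finite and satisfy φ_i(T) = ε_i(T) + wt(T)_i − wt(T)_{i+1}. -/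

import Mathlib

open scoped Classical

noncomputable section

namespace SVTCrystal

/-- A filling assigns to each (row, column) position (0-indexed) a finite set of entries. -/
abbrev Filling : Type := ℕ → ℕ → Finset ℕ

/-- `lam` is a partition shape with at most `n` rows. -/
def IsPartitionShape (n : ℕ) (lam : ℕ → ℕ) : Prop :=
  (∀ r, lam (r + 1) ≤ lam r) ∧ (∀ r, n ≤ r → lam r = 0)

/-- Semistandard set-valued tableau of shape `lam` with entries in `{1,…,n}`. -/
structure IsSVT (n : ℕ) (lam : ℕ → ℕ) (t : Filling) : Prop where
  boxNonempty : ∀ r c, c < lam r → (t r c).Nonempty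
  emptyOutside : ∀ r c, ¬ c < lam r → t r c = ∅
  entryBounds : ∀ r c a, a ∈ t r c → 1 ≤ a ∧ a ≤ n
  rowWeak : ∀ r c a b, a ∈ t r c → b ∈ t r (c + 1) → a ≤ b
  colStrict : ∀ r c a b, a ∈ t r c → b ∈ t (r + 1) c → a < b

/-- Semistandard Young tableau: a set-valued tableau all of whose boxes are singletons. -/
def IsSSYT (n : ℕ) (lam : ℕ → ℕ) (t : Filling) : Prop :=
  IsSVT n lam t ∧ ∀ r c, c < lam r → (t r c).card = 1

/-- The weight: `wt n lam t j` is the number of boxes of `t` containing the entry `j`. -/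
def wt (n : ℕ) (lam : ℕ → ℕ) (t : Filling) (j : ℕ) : ℕ :=
  ((Finset.range n ×ˢ Finset.range (lam 0)).filter (fun p => j ∈ t p.1 p.2)).card

/-- The excess: total number of extra entries. -/
def excess (n : ℕ) (lam : ℕ → ℕ) (t : Filling) : ℕ :=
  ∑ p ∈ Finset.range n ×ˢ Finset.range (lam 0), ((t p.1 p.2).card - 1)

/-- Column `c` contains the entry `a`. -/
def colHas (n : ℕ) (t : Filling) (a c : ℕ) : Prop := ∃ r, r < n ∧ a ∈ t r c

/-- The sign of column `c` for the `i`-signature rule: `+` (true) if the column contains `i`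
but not `i+1`, `-` (false) if it contains `i+1` but not `i`. -/
def colSign (n : ℕ) (t : Filling) (i c : ℕ) : Option Bool :=
  if colHas n t i c ∧ ¬ colHas n t (i + 1) c then some true
  else if colHas n t (i + 1) c ∧ ¬ colHas n t i c then some false
  else none

/-- The number of `-` (false) signs left uncanceled after scanning the word left-to-right,
iteratively canceling `-+` pairs. -/
def mctr (w : List Bool) : ℕ := w.foldl (fun cnt b => if b then cnt - 1 else cnt + 1) 0

/-- The number of `+` (true) signs left uncanceled, scanning right-to-left. -/
def pctr (w : List Bool) : ℕ := w.foldr (fun b cnt => if b then cnt + 1 else cnt - 1) 0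

/-- The word of column signs of the columns before column `c`. -/
def colWordBefore (n : ℕ) (t : Filling) (i c : ℕ) : List Bool :=
  (List.range c).filterMap (colSign n t i)

/-- The word of column signs of the columns after column `c` (among columns `< ncols`). -/
def colWordAfter (n ncols : ℕ) (t : Filling) (i c : ℕ) : List Bool :=
  ((List.range ncols).drop (c + 1)).filterMap (colSign n t i)

/-- Column `c` carries an uncanceled `+` for the `i`-signature rule. -/
def PlusCol (n ncols : ℕ) (t : Filling) (i c : ℕ) : Prop :=
  c < ncols ∧ colSign n t i c = some true ∧ mctr (colWordBefore n t i c) = 0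

/-- Column `c` carries an uncanceled `-` for the `i`-signature rule. -/
def MinusCol (n ncols : ℕ) (t : Filling) (i c : ℕ) : Prop :=
  c < ncols ∧ colSign n t i c = some false ∧ pctr (colWordAfter n ncols t i c) = 0

/-- Column `c` is the rightmost uncanceled `+`. -/
def fBoxCol (n ncols : ℕ) (t : Filling) (i c : ℕ) : Prop :=
  PlusCol n ncols t i c ∧ ∀ c', PlusCol n ncols t i c' → c' ≤ c

/-- Column `c` is the leftmost uncanceled `-`. -/
def eBoxCol (n ncols : ℕ) (t : Filling) (i c : ℕ) : Prop :=
  MinusCol n ncols t i c ∧ ∀ c', MinusCol n ncols t i c' → c ≤ c'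

/-- Replace the content of the box in row `r`, column `c` by `A`. -/
def updateBox (t : Filling) (r c : ℕ) (A : Finset ℕ) : Filling :=
  fun r' c' => if r' = r ∧ c' = c then A else t r' c'

/-- The set-valued crystal operator `f_i` (signature rule). -/
def fRaw (n : ℕ) (lam : ℕ → ℕ) (i : ℕ) (t : Filling) : Option Filling :=
  if h : ∃ c, fBoxCol n (lam 0) t i c then
    let c := Classical.choose h
    if hr : ∃ r, r < n ∧ i ∈ t r c then
      let r := Classical.choose hr
      if i ∈ t r (c + 1) then
        some (updateBox (updateBox t r (c + 1) ((t r (c + 1)).erase i)) r c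
          (insert (i + 1) (t r c)))
      else some (updateBox t r c (insert (i + 1) ((t r c).erase i)))
    else none
  else none

/-- The set-valued crystal operator `e_i` (signature rule). -/
def eRaw (n : ℕ) (lam : ℕ → ℕ) (i : ℕ) (t : Filling) : Option Filling :=
  if h : ∃ c, eBoxCol n (lam 0) t i c then
    let c := Classical.choose h
    if hr : ∃ r, r < n ∧ (i + 1) ∈ t r c then
      let r := Classical.choose hr
      if 0 < c ∧ (i + 1) ∈ t r (c - 1) then
        some (updateBox (updateBox t r (c - 1) ((t r (c - 1)).erase (i + 1))) r c
          (insert i (t r c)))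
      else some (updateBox t r c (insert i ((t r c).erase (i + 1))))
    else none
  else none

/-- Iterate a partially-defined operator. -/
def iterOpt (g : Filling → Option Filling) : ℕ → Filling → Option Filling
  | 0, t => some t
  | m + 1, t => (iterOpt g m t).bind g

/-- Highest weight (Yamanouchi) elements. -/
def IsYamanouchi (n : ℕ) (lam : ℕ → ℕ) (t : Filling) : Prop :=
  ∀ i, 1 ≤ i → i < n → eRaw n lam i t = none

/-- Closure of `t0` under the crystal operators `e_i`, `f_i` for `1 ≤ i < n`. -/
inductive Reach (n : ℕ) (lam : ℕ → ℕ) (t0 : Filling) : Filling → Prop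
  | base : Reach n lam t0 t0
  | stepF : ∀ {t t' : Filling} (i : ℕ), 1 ≤ i → i < n → Reach n lam t0 t →
      fRaw n lam i t = some t' → Reach n lam t0 t'
  | stepE : ∀ {t t' : Filling} (i : ℕ), 1 ≤ i → i < n → Reach n lam t0 t →
      eRaw n lam i t = some t' → Reach n lam t0 t'

/-- The one-row partition `(s)`. -/
def rowShape (s : ℕ) : ℕ → ℕ := fun r => if r = 0 then s else 0

/-- The one-column partition `(1^k)`. -/
def colShape (k : ℕ) : ℕ → ℕ := fun r => if r < k then 1 else 0

/-- The hook partition `(s, 1^e)`. -/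
def hookShape (s e : ℕ) : ℕ → ℕ := fun r => if r = 0 then s else if r ≤ e then 1 else 0

/-! ### K-theory crystal operators (for single rows and single columns) -/

/-- Some box of the tableau contains the entry `a`. -/
def containsEntry (n : ℕ) (lam : ℕ → ℕ) (t : Filling) (a : ℕ) : Prop :=
  ∃ r c, r < n ∧ c < lam r ∧ a ∈ t r c

/-- `p` is the rightmost box of `t` containing `i`. -/
def KBoxF (n : ℕ) (lam : ℕ → ℕ) (t : Filling) (i : ℕ) (p : ℕ × ℕ) : Prop :=
  p.1 < n ∧ p.2 < lam p.1 ∧ i ∈ t p.1 p.2 ∧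
    ∀ q : ℕ × ℕ, q.1 < n → q.2 < lam q.1 → i ∈ t q.1 q.2 → q.2 ≤ p.2

/-- The K-crystal operator `f_i^K`: if `i` occurs in `t` and `i+1` does not, add `i+1` to
the rightmost box containing `i`; otherwise `0`. -/
def fK (n : ℕ) (lam : ℕ → ℕ) (i : ℕ) (t : Filling) : Option Filling :=
  if h : (∃ p : ℕ × ℕ, KBoxF n lam t i p) ∧ ¬ containsEntry n lam t (i + 1) then
    let p := Classical.choose h.1
    some (updateBox t p.1 p.2 (insert (i + 1) (t p.1 p.2)))
  else none

/-- The K-crystal operator `e_i^K`: delete `i+1` from the box containing both `i` and `i+1`,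
if such a box exists; otherwise `0`. -/
def eK (n : ℕ) (lam : ℕ → ℕ) (i : ℕ) (t : Filling) : Option Filling :=
  if h : ∃ p : ℕ × ℕ, p.1 < n ∧ p.2 < lam p.1 ∧ i ∈ t p.1 p.2 ∧ (i + 1) ∈ t p.1 p.2 then
    let p := Classical.choose h
    some (updateBox t p.1 p.2 ((t p.1 p.2).erase (i + 1)))
  else none

/-- `t'` is the result of applying `g` to `t` as many times as possible. -/
def MaxApply (g : Filling → Option Filling) (t t' : Filling) : Prop :=
  (∃ m, iterOpt g m t = some t') ∧ g t' = none

/-- One Demazure step: apply `e_i` as many times as possible, then `e_i^K` as many times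
as possible (here `eKop i` is the `i`-th K-operator). -/
def DemStep (n : ℕ) (lam : ℕ → ℕ) (eKop : ℕ → Filling → Option Filling) (i : ℕ)
    (t t' : Filling) : Prop :=
  ∃ t1, MaxApply (eRaw n lam i) t t1 ∧ MaxApply (eKop i) t1 t'

/-- `DemReach n lam eKop [i₁,…,iℓ] t u` holds when
`u = (e_{iℓ}^K)^max e_{iℓ}^max ⋯ (e_{i₁}^K)^max e_{i₁}^max t`. -/
def DemReach (n : ℕ) (lam : ℕ → ℕ) (eKop : ℕ → Filling → Option Filling) :
    List ℕ → Filling → Filling → Prop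
  | [], t, u => t = u
  | i :: rest, t, u => ∃ t2, DemStep n lam eKop i t t2 ∧ DemReach n lam eKop rest t2 u

/-- The minimal highest weight tableau `u_λ`, whose row `r` boxes are all `{r+1}`. -/
def uTab (lam : ℕ → ℕ) : Filling := fun r c => if c < lam r then {r + 1} else ∅

/-- The K-Demazure crystal associated with a word `[i₁,…,iℓ]`. -/
def KDem (n : ℕ) (lam : ℕ → ℕ) (eKop : ℕ → Filling → Option Filling) (word : List ℕ) :
    Set Filling :=
  {t | IsSVT n lam t ∧ DemReach n lam eKop word t (uTab lam)}

/-! ### Permutations and reduced words -/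

/-- The permutation `s_{i₁} ⋯ s_{iℓ}` of a word `[i₁,…,iℓ]`, where `s_i` swaps `i`, `i+1`. -/
def wordPerm (word : List ℕ) : Equiv.Perm ℕ :=
  (word.map fun i => Equiv.swap i (i + 1)).prod

/-- `word` is a reduced word for `w` in the Coxeter generators `s_1, …, s_{n-1}`. -/
def IsReducedWord (n : ℕ) (w : Equiv.Perm ℕ) (word : List ℕ) : Prop :=
  (∀ i ∈ word, 1 ≤ i ∧ i < n) ∧ wordPerm word = w ∧
    ∀ word' : List ℕ, (∀ i ∈ word', 1 ≤ i ∧ i < n) → wordPerm word' = w →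
      word.length ≤ word'.length

/-- The Coxeter length of a permutation of `{1,…,n}`. -/
def permLength (n : ℕ) (σ : Equiv.Perm ℕ) : ℕ :=
  sInf {l | ∃ word : List ℕ, (∀ i ∈ word, 1 ≤ i ∧ i < n) ∧ wordPerm word = σ ∧
    word.length = l}

/-- The parabolic subgroup generated by `s_2, …, s_{n-1}`. -/
def parabolic (n : ℕ) : Subgroup (Equiv.Perm ℕ) :=
  Subgroup.closure {σ | ∃ i, 2 ≤ i ∧ i < n ∧ σ = Equiv.swap i (i + 1)}

/-! ### Polynomials -/

/-- Polynomials in `x₁, x₂, …` over `ℤ[β]`; the variable `β` is `Polynomial.X`. -/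
abbrev KPoly : Type := MvPolynomial ℕ (Polynomial ℤ)

/-- The scalar `β`. -/
def betaP : KPoly := MvPolynomial.C Polynomial.X

/-- The monomial `x^{wt(T)} = x₁^{wt₁} ⋯ xₙ^{wtₙ}`. -/
def xwt (n : ℕ) (lam : ℕ → ℕ) (t : Filling) : KPoly :=
  ∏ j ∈ Finset.Icc 1 n, (MvPolynomial.X j : KPoly) ^ wt n lam t j

/-- The β-character `∑_{T ∈ S} β^{excess T} x^{wt T}` of a set of tableaux. -/
def charSet (n : ℕ) (lam : ℕ → ℕ) (S : Set Filling) : KPoly :=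
  ∑ᶠ t ∈ S, betaP ^ excess n lam t * xwt n lam t

/-- The symmetric Grothendieck polynomial `𝔊_λ(x₁,…,xₙ; β)`. -/
def Groth (n : ℕ) (lam : ℕ → ℕ) : KPoly :=
  charSet n lam {t | IsSVT n lam t}

/-- The Schur polynomial `s_μ(x₁,…,xₙ)`. -/
def SchurP (n : ℕ) (mu : ℕ → ℕ) : KPoly :=
  ∑ᶠ t ∈ {t : Filling | IsSSYT n mu t}, xwt n mu t

/-- The numerator defining the Demazure–Lascoux operator `ϖ_i`. -/
def DLnum (i : ℕ) (f : KPoly) : KPoly :=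
  (MvPolynomial.X i + betaP * MvPolynomial.X i * MvPolynomial.X (i + 1)) * f -
    (MvPolynomial.X (i + 1) + betaP * MvPolynomial.X i * MvPolynomial.X (i + 1)) *
      (MvPolynomial.rename (Equiv.swap i (i + 1)) f)

/-- `DL` implements the Demazure–Lascoux operators `ϖ_i` for `1 ≤ i < n`:
`(x_i - x_{i+1}) · ϖ_i f` equals the defining numerator. -/
def IsDLOp (n : ℕ) (DL : ℕ → KPoly → KPoly) : Prop :=
  ∀ i, 1 ≤ i → i < n → ∀ f : KPoly,
    (MvPolynomial.X i - MvPolynomial.X (i + 1)) * DL i f = DLnum i f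

/-- `applyDL DL [i₁,…,iℓ] f = ϖ_{i₁} ϖ_{i₂} ⋯ ϖ_{iℓ} f`. -/
def applyDL (DL : ℕ → KPoly → KPoly) : List ℕ → KPoly → KPoly
  | [], f => f
  | i :: rest, f => DL i (applyDL DL rest f)

/-!
The signature rule sees a tableau only through its word of column signs: `+` for a column
containing `i` but not `i + 1`, `−` for the reverse. `f_i` acts at the column where the reduced
word `+⋯+−⋯−` switches sign, and both of its moves (replacing `i` by `i + 1` in a box, or
moving the `i` of the box to its right into the box as an `i + 1`) turn that active `+` into a `−`
and leave the rest of the word unchanged. The new `−` is therefore the active `−` of the result,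
where `e_i` performs exactly the inverse move; symmetrically for `e_i`. Each application of `f_i`
thus lowers the number `φ_i` of unpaired `+` by one and raises the number `ε_i` of unpaired `−`
by one, and `φ_i − ε_i` is the number of `+` minus the number of `−`, which is
`wt_i − wt_{i+1}` because an entry occurs at most once in a column.
-/

/-! ### The signature rule on words -/

def mctrFrom (k : ℕ) (w : List Bool) : ℕ :=
  w.foldl (fun cnt b => if b then cnt - 1 else cnt + 1) k

def pctrFrom (k : ℕ) (w : List Bool) : ℕ :=
  w.foldr (fun b cnt => if b then cnt + 1 else cnt - 1) k

theorem mctr_append (u v : List Bool) : mctr (u ++ v) = mctrFrom (mctr u) v :=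
  List.foldl_append ..

theorem pctr_append (u v : List Bool) : pctr (u ++ v) = pctrFrom (pctr v) u :=
  List.foldr_append ..

theorem mctrFrom_cons (k : ℕ) (b : Bool) (w : List Bool) :
    mctrFrom k (b :: w) = mctrFrom (if b then k - 1 else k + 1) w := rfl

theorem pctrFrom_cons (k : ℕ) (b : Bool) (w : List Bool) :
    pctrFrom k (b :: w) = if b then pctrFrom k w + 1 else pctrFrom k w - 1 := rfl

theorem mctrFrom_eq_max (w : List Bool) (k : ℕ) :
    mctrFrom k w = max (mctr w) (k + w.count false - w.count true) := by
  induction w generalizing k with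
  | nil => simp [mctrFrom, mctr]
  | cons b w ih =>
    rw [mctrFrom_cons, ih, show mctr (b :: w) = mctrFrom 0 (b :: w) from rfl, mctrFrom_cons, ih]
    cases b <;>
      simp only [Bool.false_eq_true, Bool.true_eq_false, ↓reduceIte, List.count_cons_self,
        List.count_cons_of_ne, ne_eq, not_false_eq_true, zero_add, zero_tsub, Nat.max_assoc] <;>
      omega

theorem pctrFrom_eq_max (w : List Bool) (k : ℕ) :
    pctrFrom k w = max (pctr w) (k + w.count true - w.count false) := by
  induction w with
  | nil => simp [pctrFrom, pctr]
  | cons b w ih =>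
    rw [pctrFrom_cons, ih, show pctr (b :: w) = pctrFrom 0 (b :: w) from rfl, pctrFrom_cons,
      show pctrFrom 0 w = pctr w from rfl]
    cases b <;>
      simp only [Bool.false_eq_true, Bool.true_eq_false, ↓reduceIte, List.count_cons_self,
        List.count_cons_of_ne, ne_eq, not_false_eq_true] <;>
      omega

theorem pctr_add_count_false (w : List Bool) :
    pctr w + w.count false = mctr w + w.count true := by
  induction w with
  | nil => rfl
  | cons b w ih =>
    rw [show pctr (b :: w) = pctrFrom 0 (b :: w) from rfl, pctrFrom_cons,
      show mctr (b :: w) = mctrFrom 0 (b :: w) from rfl, mctrFrom_cons, mctrFrom_eq_max,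
      show pctrFrom 0 w = pctr w from rfl]
    cases b <;>
      simp only [Bool.false_eq_true, Bool.true_eq_false, ↓reduceIte, List.count_cons_self,
        List.count_cons_of_ne, ne_eq, not_false_eq_true, zero_add, zero_tsub] <;>
      omega

theorem pctr_append_true_cons {u : List Bool} (v : List Bool) (hu : mctr u = 0) :
    pctr (u ++ true :: v) = pctr u + pctr v + 1 := by
  have := pctr_add_count_false u
  rw [pctr_append, pctrFrom_eq_max, show pctr (true :: v) = pctr v + 1 from rfl]
  omega

theorem pctr_append_false_cons (u : List Bool) {v : List Bool} (hv : pctr v = 0) :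
    pctr (u ++ false :: v) = pctr u := by
  have := pctr_add_count_false u
  rw [pctr_append, pctrFrom_eq_max, show pctr (false :: v) = pctr v - 1 from rfl]
  omega

theorem mctr_append_true_cons {u : List Bool} (v : List Bool) (hu : mctr u = 0) :
    mctr (u ++ true :: v) = mctr v := by
  rw [mctr_append, hu]
  rfl

theorem mctr_append_false_cons (u : List Bool) {v : List Bool} (hv : pctr v = 0) :
    mctr (u ++ false :: v) = mctr u + mctr v + 1 := by
  have := pctr_add_count_false v
  rw [mctr_append, mctrFrom_cons, mctrFrom_eq_max]
  simp only [Bool.false_eq_true, ↓reduceIte]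
  omega

/-- `colWordBefore n t i c` and `colWordAfter n N t i c` are, definitionally,
`signSeg (colSign n t i) 0 c` and `signSeg (colSign n t i) (c + 1) N`. -/
def signSeg (σ : ℕ → Option Bool) (s e : ℕ) : List Bool :=
  ((List.range e).drop s).filterMap σ

section signSeg

variable (σ : ℕ → Option Bool)

theorem signSeg_of_le {s e : ℕ} (h : e ≤ s) : signSeg σ s e = [] := by
  simp [signSeg, List.drop_eq_nil_of_le, h]

theorem signSeg_append {s m e : ℕ} (hsm : s ≤ m) (hme : m ≤ e) :
    signSeg σ s e = signSeg σ s m ++ signSeg σ m e := by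
  have hsplit : List.range e = List.range m ++ (List.range e).drop m := by
    conv_lhs => rw [← List.take_append_drop m (List.range e)]
    rw [List.take_range, min_eq_left hme]
  rw [signSeg, signSeg, signSeg, ← List.filterMap_append]
  conv_lhs => rw [hsplit]
  rw [List.drop_append_of_le_length (by simpa using hsm)]

theorem signSeg_single (c : ℕ) : signSeg σ c (c + 1) = (σ c).toList := by
  cases h : σ c <;> simp [signSeg, List.range_succ, h]

theorem signSeg_succ_right {s e : ℕ} (h : s ≤ e) :
    signSeg σ s (e + 1) = signSeg σ s e ++ (σ e).toList := by
  rw [signSeg_append σ h (Nat.le_succ e), signSeg_single]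

theorem signSeg_split {s c e : ℕ} (hsc : s ≤ c) (hce : c < e) :
    signSeg σ s e = signSeg σ s c ++ (σ c).toList ++ signSeg σ (c + 1) e := by
  rw [signSeg_append σ hsc hce.le, signSeg_append σ (Nat.le_succ c) hce, signSeg_single,
    List.append_assoc]

theorem signSeg_split_of_eq_some {s c e : ℕ} {b : Bool} (hsc : s ≤ c) (hce : c < e)
    (hb : σ c = some b) : signSeg σ s e = signSeg σ s c ++ b :: signSeg σ (c + 1) e := by
  rw [signSeg_split σ hsc hce, hb]
  simp

theorem signSeg_congr {σ' : ℕ → Option Bool} {s e : ℕ}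
    (h : ∀ c, s ≤ c → c < e → σ' c = σ c) : signSeg σ' s e = signSeg σ s e := by
  refine List.filterMap_congr fun c hc => ?_
  rw [List.range_eq_range', List.drop_range', List.mem_range'_1] at hc
  exact h c (by omega) (by omega)

theorem exists_plus_of_pctr_pos {s e : ℕ} (h : 0 < pctr (signSeg σ s e)) :
    ∃ c, s ≤ c ∧ c < e ∧ σ c = some true ∧ mctr (signSeg σ s c) = 0 ∧
      pctr (signSeg σ (c + 1) e) = 0 := by
  induction e with
  | zero => simp [signSeg_of_le, pctr] at h
  | succ e ih =>
    obtain hes | hse := lt_or_ge e s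
    · simp [signSeg_of_le σ (show e + 1 ≤ s by omega), pctr] at h
    rw [signSeg_succ_right σ hse] at h
    obtain hσ | ⟨b, hσ⟩ := Option.eq_none_or_eq_some (σ e)
    · obtain ⟨c, hsc, hce, hc, hmc, hpc⟩ := ih (by simpa [hσ] using h)
      refine ⟨c, hsc, by omega, hc, hmc, ?_⟩
      simpa [signSeg_succ_right σ (show c + 1 ≤ e from hce), hσ] using hpc
    cases b
    · rw [hσ, Option.toList_some, pctr_append_false_cons _ rfl] at h
      obtain ⟨c, hsc, hce, hc, hmc, hpc⟩ := ih h
      refine ⟨c, hsc, by omega, hc, hmc, ?_⟩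
      rw [signSeg_succ_right σ (show c + 1 ≤ e from hce), hσ, Option.toList_some,
        pctr_append_false_cons _ rfl, hpc]
    by_cases hw : mctr (signSeg σ s e) = 0
    · exact ⟨e, hse, by omega, hσ, hw, by simp [signSeg_of_le, pctr]⟩
    have hpos : 0 < pctr (signSeg σ s e) := by
      have := pctr_add_count_false (signSeg σ s e)
      rw [hσ, Option.toList_some, pctr_append, show pctr [true] = 1 from rfl,
        pctrFrom_eq_max] at h
      omega
    obtain ⟨c, hsc, hce, hc, hmc, hpc⟩ := ih hpos
    refine ⟨c, hsc, by omega, hc, hmc, ?_⟩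
    rw [signSeg_split_of_eq_some σ hsc hce hc, mctr_append_true_cons _ hmc] at hw
    have := pctr_add_count_false (signSeg σ (c + 1) e)
    rw [signSeg_succ_right σ (show c + 1 ≤ e from hce), hσ, Option.toList_some, pctr_append,
      show pctr [true] = 1 from rfl, pctrFrom_eq_max]
    omega

theorem exists_minus_of_mctr_pos {s e : ℕ} (h : 0 < mctr (signSeg σ s e)) :
    ∃ c, s ≤ c ∧ c < e ∧ σ c = some false ∧ mctr (signSeg σ s c) = 0 ∧
      pctr (signSeg σ (c + 1) e) = 0 := by
  induction e with
  | zero => simp [signSeg_of_le, mctr] at h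
  | succ e ih =>
    obtain hes | hse := lt_or_ge e s
    · simp [signSeg_of_le σ (show e + 1 ≤ s by omega), mctr] at h
    rw [signSeg_succ_right σ hse] at h
    obtain hσ | ⟨b, hσ⟩ := Option.eq_none_or_eq_some (σ e)
    · obtain ⟨c, hsc, hce, hc, hmc, hpc⟩ := ih (by simpa [hσ] using h)
      refine ⟨c, hsc, by omega, hc, hmc, ?_⟩
      simpa [signSeg_succ_right σ (show c + 1 ≤ e from hce), hσ] using hpc
    cases b
    · by_cases hw : mctr (signSeg σ s e) = 0
      · exact ⟨e, hse, by omega, hσ, hw, by simp [signSeg_of_le, pctr]⟩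
      obtain ⟨c, hsc, hce, hc, hmc, hpc⟩ := ih (Nat.pos_of_ne_zero hw)
      refine ⟨c, hsc, by omega, hc, hmc, ?_⟩
      rw [signSeg_succ_right σ (show c + 1 ≤ e from hce), hσ, Option.toList_some,
        pctr_append_false_cons _ rfl, hpc]
    rw [hσ, Option.toList_some, mctr_append,
      show ∀ k, mctrFrom k [true] = k - 1 from fun _ => rfl] at h
    obtain ⟨c, hsc, hce, hc, hmc, hpc⟩ := ih (by omega)
    refine ⟨c, hsc, by omega, hc, hmc, ?_⟩
    rw [signSeg_split_of_eq_some σ hsc hce hc, mctr_append_false_cons _ hpc] at h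
    have := pctr_add_count_false (signSeg σ (c + 1) e)
    rw [signSeg_succ_right σ (show c + 1 ≤ e from hce), hσ, Option.toList_some, pctr_append,
      show pctr [true] = 1 from rfl, pctrFrom_eq_max]
    omega

theorem count_signSeg (N : ℕ) (b : Bool) :
    (signSeg σ 0 N).count b = ((Finset.range N).filter (fun c => σ c = some b)).card := by
  simp [signSeg, List.count_filterMap, Finset.card, Multiset.range, List.countP_eq_length_filter,
    beq_eq_decide]

end signSeg

/-- `c` is the column where the reduced word `+⋯+−⋯−` of `σ` on the columns `< N` switches
from `+` to `−`, and it carries `b`: the rightmost unpaired `+` or the leftmost unpaired `−`. -/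
def IsActive (σ : ℕ → Option Bool) (N c : ℕ) (b : Bool) : Prop :=
  c < N ∧ σ c = some b ∧ mctr (signSeg σ 0 c) = 0 ∧ pctr (signSeg σ (c + 1) N) = 0

section IsActive

variable {σ σ' : ℕ → Option Bool} {N c : ℕ}

theorem isActive_true_iff : IsActive σ N c true ↔
    (c < N ∧ σ c = some true ∧ mctr (signSeg σ 0 c) = 0) ∧
      ∀ c', c' < N ∧ σ c' = some true ∧ mctr (signSeg σ 0 c') = 0 → c' ≤ c := by
  constructor
  · rintro ⟨hc, hσ, hm, hp⟩
    refine ⟨⟨hc, hσ, hm⟩, fun c' ⟨hc', hσ', hm'⟩ => ?_⟩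
    by_contra! hlt
    rw [signSeg_split_of_eq_some σ (Nat.zero_le c) hlt hσ, mctr_append_true_cons _ hm] at hm'
    rw [signSeg_split_of_eq_some σ hlt hc' hσ', pctr_append_true_cons _ hm'] at hp
    omega
  · rintro ⟨⟨hc, hσ, hm⟩, hmax⟩
    refine ⟨hc, hσ, hm, Nat.eq_zero_of_not_pos fun hp => ?_⟩
    obtain ⟨c', hcc', hc', hσ', hm', -⟩ := exists_plus_of_pctr_pos σ hp
    have := hmax c' ⟨hc', hσ', by
      rw [signSeg_split_of_eq_some σ (Nat.zero_le c) hcc' hσ, mctr_append_true_cons _ hm, hm']⟩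
    omega

theorem isActive_false_iff : IsActive σ N c false ↔
    (c < N ∧ σ c = some false ∧ pctr (signSeg σ (c + 1) N) = 0) ∧
      ∀ c', c' < N ∧ σ c' = some false ∧ pctr (signSeg σ (c' + 1) N) = 0 → c ≤ c' := by
  constructor
  · rintro ⟨hc, hσ, hm, hp⟩
    refine ⟨⟨hc, hσ, hp⟩, fun c' ⟨hc', hσ', hp'⟩ => ?_⟩
    by_contra! hlt
    rw [signSeg_split_of_eq_some σ hlt hc hσ, pctr_append_false_cons _ hp] at hp'
    rw [signSeg_split_of_eq_some σ (Nat.zero_le c') hlt hσ', mctr_append_false_cons _ hp'] at hm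
    omega
  · rintro ⟨⟨hc, hσ, hp⟩, hmin⟩
    refine ⟨hc, hσ, Nat.eq_zero_of_not_pos fun hm => ?_, hp⟩
    obtain ⟨c', -, hc'c, hσ', -, hp'⟩ := exists_minus_of_mctr_pos σ hm
    have := hmin c' ⟨by omega, hσ', by
      rw [signSeg_split_of_eq_some σ hc'c hc hσ, pctr_append_false_cons _ hp, hp']⟩
    omega

theorem exists_isActive_true_iff :
    (∃ c, IsActive σ N c true) ↔ 0 < pctr (signSeg σ 0 N) := by
  constructor
  · rintro ⟨c, hc, hσ, hm, -⟩
    rw [signSeg_split_of_eq_some σ (Nat.zero_le c) hc hσ, pctr_append_true_cons _ hm]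
    omega
  · intro h
    obtain ⟨c, -, hc, hσ, hm, hp⟩ := exists_plus_of_pctr_pos σ h
    exact ⟨c, hc, hσ, hm, hp⟩

theorem exists_isActive_false_iff :
    (∃ c, IsActive σ N c false) ↔ 0 < mctr (signSeg σ 0 N) := by
  constructor
  · rintro ⟨c, hc, hσ, -, hp⟩
    rw [signSeg_split_of_eq_some σ (Nat.zero_le c) hc hσ, mctr_append_false_cons _ hp]
    omega
  · intro h
    obtain ⟨c, -, hc, hσ, hm, hp⟩ := exists_minus_of_mctr_pos σ h
    exact ⟨c, hc, hσ, hm, hp⟩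

theorem IsActive.congr {b b' : Bool} {c' : ℕ} (h : IsActive σ N c b) (hc' : c' < N)
    (hb' : σ' c' = some b') (hbefore : signSeg σ' 0 c' = signSeg σ 0 c)
    (hafter : signSeg σ' (c' + 1) N = signSeg σ (c + 1) N) : IsActive σ' N c' b' :=
  ⟨hc', hb', hbefore ▸ h.2.2.1, hafter ▸ h.2.2.2⟩

theorem IsActive.flip_counts {c' : ℕ} (h : IsActive σ N c true) (hc' : c' < N)
    (hb' : σ' c' = some false) (hbefore : signSeg σ' 0 c' = signSeg σ 0 c)
    (hafter : signSeg σ' (c' + 1) N = signSeg σ (c + 1) N) :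
    pctr (signSeg σ' 0 N) + 1 = pctr (signSeg σ 0 N) ∧
      mctr (signSeg σ' 0 N) = mctr (signSeg σ 0 N) + 1 := by
  obtain ⟨hc, hσ, hm, hp⟩ := h
  rw [signSeg_split_of_eq_some σ (Nat.zero_le c) hc hσ,
    signSeg_split_of_eq_some σ' (Nat.zero_le c') hc' hb', hbefore, hafter,
    pctr_append_true_cons _ hm, pctr_append_false_cons _ hp, mctr_append_true_cons _ hm,
    mctr_append_false_cons _ hp, hm, hp]
  omega

theorem signSeg_eq_of_eq_off (hoff : ∀ c', c' ≠ c → σ' c' = σ c') :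
    signSeg σ' 0 c = signSeg σ 0 c ∧ signSeg σ' (c + 1) N = signSeg σ (c + 1) N :=
  ⟨signSeg_congr σ fun c' _ h => hoff c' (by omega),
    signSeg_congr σ fun c' h _ => hoff c' (by omega)⟩

theorem signSeg_eq_of_shift (hc : c + 1 < N)
    (hoff : ∀ c', c' ≠ c → c' ≠ c + 1 → σ' c' = σ c') (hσ : σ (c + 1) = none)
    (hσ' : σ' c = none) :
    signSeg σ' 0 (c + 1) = signSeg σ 0 c ∧
      signSeg σ' (c + 1 + 1) N = signSeg σ (c + 1) N := by
  constructor
  · rw [signSeg_succ_right σ' (Nat.zero_le c), hσ', Option.toList_none, List.append_nil]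
    exact signSeg_congr σ fun c' _ h => hoff c' (by omega) (by omega)
  · rw [signSeg_append σ (Nat.le_succ (c + 1)) hc, signSeg_single, hσ, Option.toList_none,
      List.nil_append]
    exact signSeg_congr σ fun c' h _ => hoff c' (by omega) (by omega)

end IsActive

theorem fBoxCol_iff {n N : ℕ} {t : Filling} {i c : ℕ} :
    fBoxCol n N t i c ↔ IsActive (colSign n t i) N c true :=
  isActive_true_iff.symm

theorem eBoxCol_iff {n N : ℕ} {t : Filling} {i c : ℕ} :
    eBoxCol n N t i c ↔ IsActive (colSign n t i) N c false :=
  isActive_false_iff.symm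

theorem fBoxCol_unique {n N : ℕ} {t : Filling} {i c c' : ℕ} (h : fBoxCol n N t i c)
    (h' : fBoxCol n N t i c') : c = c' :=
  le_antisymm (h'.2 _ h.1) (h.2 _ h'.1)

theorem eBoxCol_unique {n N : ℕ} {t : Filling} {i c c' : ℕ} (h : eBoxCol n N t i c)
    (h' : eBoxCol n N t i c') : c = c' :=
  le_antisymm (h.2 _ h'.1) (h'.2 _ h.1)

/-! ### Set-valued tableaux -/

abbrev signWord (n N : ℕ) (t : Filling) (i : ℕ) : List Bool :=
  signSeg (colSign n t i) 0 N

theorem IsPartitionShape.antitone {n : ℕ} {lam : ℕ → ℕ} (hsh : IsPartitionShape n lam) :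
    Antitone lam :=
  antitone_nat_of_succ_le hsh.1

section IsSVT

variable {n : ℕ} {lam : ℕ → ℕ} {t : Filling}

theorem IsSVT.lt_of_mem (hT : IsSVT n lam t) {r c a : ℕ} (h : a ∈ t r c) : c < lam r := by
  by_contra hc
  simp [hT.emptyOutside r c hc] at h

theorem IsSVT.row_lt (hsh : IsPartitionShape n lam) (hT : IsSVT n lam t) {r c a : ℕ}
    (h : a ∈ t r c) : r < n := by
  by_contra hr
  have := hT.lt_of_mem h
  rw [hsh.2 r (not_lt.mp hr)] at this
  omega

theorem IsSVT.lt_of_row_lt (hsh : IsPartitionShape n lam) (hT : IsSVT n lam t) {r r' c a b : ℕ}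
    (hrr : r < r') (ha : a ∈ t r c) (hb : b ∈ t r' c) : a < b := by
  induction r', hrr using Nat.le_induction generalizing b with
  | base => exact hT.colStrict r c a b ha hb
  | succ r' _ ih =>
    obtain ⟨x, hx⟩ := hT.boxNonempty r' c ((hT.lt_of_mem hb).trans_le (hsh.1 r'))
    exact (ih hx).trans (hT.colStrict r' c x b hx hb)

theorem IsSVT.row_eq_of_mem (hsh : IsPartitionShape n lam) (hT : IsSVT n lam t) {r r' c a : ℕ}
    (ha : a ∈ t r c) (ha' : a ∈ t r' c) : r = r' := by
  rcases lt_trichotomy r r' with h | h | h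
  · exact absurd (hT.lt_of_row_lt hsh h ha ha') (lt_irrefl a)
  · exact h
  · exact absurd (hT.lt_of_row_lt hsh h ha' ha) (lt_irrefl a)

theorem IsSVT.not_mem_of_not_colHas (hsh : IsPartitionShape n lam) (hT : IsSVT n lam t)
    {a c : ℕ} (h : ¬ colHas n t a c) (r : ℕ) : a ∉ t r c :=
  fun ha => h ⟨r, hT.row_lt hsh ha, ha⟩

end IsSVT

section updateBox

variable {t : Filling} {r c : ℕ} {A B : Finset ℕ}

@[simp] theorem updateBox_same : updateBox t r c A r c = A := by
  simp [updateBox]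

theorem updateBox_of_ne {r' c' : ℕ} (h : ¬ (r' = r ∧ c' = c)) :
    updateBox t r c A r' c' = t r' c' :=
  if_neg h

theorem updateBox_of_col_ne {r' c' : ℕ} (h : c' ≠ c) : updateBox t r c A r' c' = t r' c' :=
  updateBox_of_ne fun h' => h h'.2

@[simp] theorem updateBox_updateBox_same :
    updateBox (updateBox t r c A) r c B = updateBox t r c B := by
  funext r' c'
  simp only [updateBox]
  split_ifs <;> rfl

@[simp] theorem updateBox_eq_self : updateBox t r c (t r c) = t := by
  funext r' c'
  simp only [updateBox]
  split_ifs with h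
  · rw [h.1, h.2]
  · rfl

theorem updateBox_comm {c' : ℕ} (h : c ≠ c') :
    updateBox (updateBox t r c A) r c' B = updateBox (updateBox t r c' B) r c A := by
  funext r'' c''
  simp only [updateBox]
  split_ifs <;> first | rfl | omega

end updateBox

def swapEntry (t : Filling) (r c a b : ℕ) : Filling :=
  updateBox t r c (insert b ((t r c).erase a))

def moveEntry (t : Filling) (r c a c' b : ℕ) : Filling :=
  updateBox (updateBox t r c' ((t r c').erase a)) r c (insert b (t r c))

theorem swapEntry_swapEntry {t : Filling} {r c a b : ℕ} (ha : a ∈ t r c) (hb : b ∉ t r c) :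
    swapEntry (swapEntry t r c a b) r c b a = t := by
  rw [swapEntry, swapEntry, updateBox_updateBox_same, updateBox_same,
    Finset.erase_insert fun h => hb (Finset.mem_of_mem_erase h), Finset.insert_erase ha,
    updateBox_eq_self]

theorem moveEntry_moveEntry {t : Filling} {r c a c' b : ℕ} (hcc : c ≠ c') (ha : a ∈ t r c')
    (hb : b ∉ t r c) : moveEntry (moveEntry t r c a c' b) r c' b c a = t := by
  rw [moveEntry, moveEntry, updateBox_same, updateBox_of_col_ne hcc.symm, updateBox_same,
    Finset.erase_insert hb, Finset.insert_erase ha, updateBox_updateBox_same,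
    updateBox_comm hcc, updateBox_updateBox_same, updateBox_eq_self, updateBox_eq_self]

section IsSVT

variable {n : ℕ} {lam : ℕ → ℕ} {t : Filling} {r c : ℕ} {A B : Finset ℕ}

theorem IsSVT.updateBox_of_bounds (hT : IsSVT n lam t) (hc : c < lam r) (hA : A.Nonempty)
    (hbd : ∀ a ∈ A, 1 ≤ a ∧ a ≤ n)
    (hleft : ∀ c', c' + 1 = c → ∀ x ∈ t r c', ∀ a ∈ A, x ≤ a)
    (hright : ∀ a ∈ A, ∀ y ∈ t r (c + 1), a ≤ y)
    (habove : ∀ r', r' + 1 = r → ∀ x ∈ t r' c, ∀ a ∈ A, x < a)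
    (hbelow : ∀ a ∈ A, ∀ y ∈ t (r + 1) c, a < y) : IsSVT n lam (updateBox t r c A) where
  boxNonempty r' c' h := by
    simp only [updateBox]
    split_ifs
    · exact hA
    · exact hT.boxNonempty r' c' h
  emptyOutside r' c' h := by
    simp only [updateBox]
    split_ifs with h'
    · exact absurd (h'.1 ▸ h'.2 ▸ hc) h
    · exact hT.emptyOutside r' c' h
  entryBounds r' c' a ha := by
    simp only [updateBox] at ha
    split_ifs at ha
    · exact hbd a ha
    · exact hT.entryBounds r' c' a ha
  rowWeak r' c' a b ha hb := by
    simp only [updateBox] at ha hb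
    split_ifs at ha hb with h₁ h₂ h₂
    · omega
    · obtain ⟨rfl, rfl⟩ := h₁
      exact hright a ha b hb
    · obtain ⟨rfl, h₂⟩ := h₂
      exact hleft c' h₂ a ha b hb
    · exact hT.rowWeak r' c' a b ha hb
  colStrict r' c' a b ha hb := by
    simp only [updateBox] at ha hb
    split_ifs at ha hb with h₁ h₂ h₂
    · omega
    · obtain ⟨rfl, rfl⟩ := h₁
      exact hbelow a ha b hb
    · obtain ⟨h₂, rfl⟩ := h₂
      exact habove r' h₂ a ha b hb
    · exact hT.colStrict r' c' a b ha hb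

theorem IsSVT.updateBox_of_subset (hT : IsSVT n lam t) (hB : B ⊆ t r c) (hne : B.Nonempty) :
    IsSVT n lam (updateBox t r c B) := by
  obtain ⟨b, hb⟩ := hne
  refine hT.updateBox_of_bounds (hT.lt_of_mem (hB hb)) ⟨b, hb⟩
    (fun a ha => hT.entryBounds r c a (hB ha)) ?_
    (fun a ha y hy => hT.rowWeak r c a y (hB ha) hy) ?_
    (fun a ha y hy => hT.colStrict r c a y (hB ha) hy)
  · rintro c' rfl x hx a ha
    exact hT.rowWeak r c' x a hx (hB ha)
  · rintro r' rfl x hx a ha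
    exact hT.colStrict r' c x a hx (hB ha)

theorem IsSVT.updateBox_insert (hT : IsSVT n lam t) (hB : B ⊆ t r c) (hc : c < lam r) {a : ℕ}
    (ha : 1 ≤ a ∧ a ≤ n) (hleft : ∀ c', c' + 1 = c → ∀ x ∈ t r c', x ≤ a)
    (hright : ∀ y ∈ t r (c + 1), a ≤ y)
    (habove : ∀ r', r' + 1 = r → ∀ x ∈ t r' c, x < a)
    (hbelow : ∀ y ∈ t (r + 1) c, a < y) : IsSVT n lam (updateBox t r c (insert a B)) := by
  refine hT.updateBox_of_bounds hc (Finset.insert_nonempty a B) ?_ ?_ ?_ ?_ ?_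
  · simp only [Finset.mem_insert, forall_eq_or_imp]
    exact ⟨ha, fun a' ha' => hT.entryBounds r c a' (hB ha')⟩
  · rintro c' rfl x hx a' ha'
    rcases Finset.mem_insert.mp ha' with rfl | ha'
    · exact hleft c' rfl x hx
    · exact hT.rowWeak r c' x a' hx (hB ha')
  · simp only [Finset.mem_insert, forall_eq_or_imp]
    exact ⟨hright, fun a' ha' y hy => hT.rowWeak r c a' y (hB ha') hy⟩
  · rintro r' rfl x hx a' ha'
    rcases Finset.mem_insert.mp ha' with rfl | ha'
    · exact habove r' rfl x hx
    · exact hT.colStrict r' c x a' hx (hB ha')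
  · simp only [Finset.mem_insert, forall_eq_or_imp]
    exact ⟨hbelow, fun a' ha' y hy => hT.colStrict r c a' y (hB ha') hy⟩

end IsSVT

section colSign

variable {n : ℕ} {t : Filling} {i c : ℕ}

theorem colSign_eq_some_true :
    colSign n t i c = some true ↔ colHas n t i c ∧ ¬ colHas n t (i + 1) c := by
  unfold colSign
  split_ifs <;> simp_all

theorem colSign_eq_some_false :
    colSign n t i c = some false ↔ colHas n t (i + 1) c ∧ ¬ colHas n t i c := by
  unfold colSign
  split_ifs <;> simp_all

theorem colSign_eq_none (h : colHas n t i c ↔ colHas n t (i + 1) c) : colSign n t i c = none := by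
  unfold colSign
  split_ifs <;> simp_all

variable {r : ℕ} {A : Finset ℕ}

theorem colHas_updateBox_of_ne {a c' : ℕ} (h : c' ≠ c) :
    colHas n (updateBox t r c A) a c' ↔ colHas n t a c' := by
  simp only [colHas, updateBox_of_col_ne h]

theorem colSign_updateBox_of_ne {c' : ℕ} (h : c' ≠ c) :
    colSign n (updateBox t r c A) i c' = colSign n t i c' := by
  simp only [colSign, colHas_updateBox_of_ne h]

theorem colHas_updateBox_same {a : ℕ} (hr : r < n) (h : ∀ r', r' ≠ r → a ∉ t r' c) :
    colHas n (updateBox t r c A) a c ↔ a ∈ A := by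
  constructor
  · rintro ⟨r', -, ha⟩
    by_cases hr' : r' = r
    · rwa [hr', updateBox_same] at ha
    · exact absurd (by rwa [updateBox_of_ne fun h' => hr' h'.1] at ha) (h r' hr')
  · exact fun ha => ⟨r, hr, by rwa [updateBox_same]⟩

end colSign

section unfold

variable {n : ℕ} {lam : ℕ → ℕ} {t : Filling} {i r c : ℕ}

theorem fRaw_of_fBoxCol (hsh : IsPartitionShape n lam) (hT : IsSVT n lam t)
    (hfb : fBoxCol n (lam 0) t i c) (hi : i ∈ t r c) :
    fRaw n lam i t = if i ∈ t r (c + 1) then some (moveEntry t r c i (c + 1) (i + 1))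
      else some (swapEntry t r c i (i + 1)) := by
  have hc : ∃ c, fBoxCol n (lam 0) t i c := ⟨c, hfb⟩
  have hr : ∃ r, r < n ∧ i ∈ t r c := ⟨r, hT.row_lt hsh hi, hi⟩
  unfold fRaw
  rw [dif_pos hc, fBoxCol_unique (Classical.choose_spec hc) hfb, dif_pos hr,
    hT.row_eq_of_mem hsh (Classical.choose_spec hr).2 hi]
  rfl

theorem eRaw_of_eBoxCol (hsh : IsPartitionShape n lam) (hT : IsSVT n lam t)
    (heb : eBoxCol n (lam 0) t i c) (hi : i + 1 ∈ t r c) :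
    eRaw n lam i t =
      if 0 < c ∧ i + 1 ∈ t r (c - 1) then some (moveEntry t r c (i + 1) (c - 1) i)
      else some (swapEntry t r c (i + 1) i) := by
  have hc : ∃ c, eBoxCol n (lam 0) t i c := ⟨c, heb⟩
  have hr : ∃ r, r < n ∧ i + 1 ∈ t r c := ⟨r, hT.row_lt hsh hi, hi⟩
  unfold eRaw
  rw [dif_pos hc, eBoxCol_unique (Classical.choose_spec hc) heb, dif_pos hr,
    hT.row_eq_of_mem hsh (Classical.choose_spec hr).2 hi]
  rfl

theorem fRaw_eq_none (h : ¬ ∃ c, fBoxCol n (lam 0) t i c) : fRaw n lam i t = none := by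
  rw [fRaw, dif_neg h]

theorem eRaw_eq_none (h : ¬ ∃ c, eBoxCol n (lam 0) t i c) : eRaw n lam i t = none := by
  rw [eRaw, dif_neg h]

end unfold

/-! ### The operator `f_i` -/

section fStep

variable {n : ℕ} {lam : ℕ → ℕ} {t : Filling} {i r c : ℕ}

theorem fBoxCol.succ_not_mem (hfb : fBoxCol n (lam 0) t i c) (hsh : IsPartitionShape n lam)
    (hT : IsSVT n lam t) (r' : ℕ) : i + 1 ∉ t r' c :=
  hT.not_mem_of_not_colHas hsh (colSign_eq_some_true.mp hfb.1.2.1).2 r'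

/-- Otherwise column `c + 1` would carry an unpaired `+` to the right of `c`. -/
theorem fBoxCol.succ_mem_right (hfb : fBoxCol n (lam 0) t i c) (hsh : IsPartitionShape n lam)
    (hT : IsSVT n lam t) (hi : i ∈ t r c) (hi' : i ∈ t r (c + 1)) : i + 1 ∈ t r (c + 1) := by
  have hr := hT.row_lt hsh hi
  obtain ⟨r₁, -, h₁⟩ : colHas n t (i + 1) (c + 1) := by
    by_contra hno
    have hplus : colSign n t i (c + 1) = some true :=
      colSign_eq_some_true.mpr ⟨⟨r, hr, hi'⟩, hno⟩
    have hmctr : mctr (signSeg (colSign n t i) 0 (c + 1)) = 0 := by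
      rw [signSeg_succ_right _ (Nat.zero_le c), hfb.1.2.1]
      exact mctr_append_true_cons (u := signSeg _ 0 c) [] hfb.1.2.2
    have := hfb.2 (c + 1)
      ⟨(hT.lt_of_mem hi').trans_le (hsh.antitone (Nat.zero_le r)), hplus, hmctr⟩
    omega
  rcases lt_trichotomy r₁ r with h | rfl | h
  · exact absurd (hT.lt_of_row_lt hsh h h₁ hi') (by omega)
  · exact h₁
  · obtain ⟨b, hb⟩ := hT.boxNonempty r₁ c (by have := hT.lt_of_mem h₁; omega)
    have h₂ := hT.lt_of_row_lt hsh h hi hb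
    have h₃ := hT.rowWeak r₁ c b (i + 1) hb h₁
    have hb' : b = i + 1 := by omega
    exact absurd (hb' ▸ hb) (hfb.succ_not_mem hsh hT r₁)

theorem IsSVT.swapEntry_of_fBoxCol (hT : IsSVT n lam t) (hsh : IsPartitionShape n lam)
    (hfb : fBoxCol n (lam 0) t i c) (hin : i < n) (hi : i ∈ t r c) (hA : i ∉ t r (c + 1)) :
    IsSVT n lam (swapEntry t r c i (i + 1)) := by
  refine hT.updateBox_insert (Finset.erase_subset i _) (hT.lt_of_mem hi) ⟨by omega, hin⟩
    ?_ ?_ ?_ ?_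
  · rintro c' rfl x hx
    exact (hT.rowWeak r c' x i hx hi).trans (Nat.le_succ i)
  · intro y hy
    have := hT.rowWeak r c i y hi hy
    have : y ≠ i := fun h => hA (h ▸ hy)
    omega
  · rintro r' rfl x hx
    exact (hT.colStrict r' c x i hx hi).trans (Nat.lt_succ_self i)
  · intro y hy
    have := hT.colStrict r c i y hi hy
    have : y ≠ i + 1 := fun h => hfb.succ_not_mem hsh hT (r + 1) (h ▸ hy)
    omega

theorem IsSVT.moveEntry_of_fBoxCol (hT : IsSVT n lam t) (hsh : IsPartitionShape n lam)
    (hfb : fBoxCol n (lam 0) t i c) (hin : i < n) (hi : i ∈ t r c) (hB : i ∈ t r (c + 1)) :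
    IsSVT n lam (moveEntry t r c i (c + 1) (i + 1)) := by
  have hT₁ : IsSVT n lam (updateBox t r (c + 1) ((t r (c + 1)).erase i)) :=
    hT.updateBox_of_subset (Finset.erase_subset i _)
      ⟨i + 1, Finset.mem_erase.mpr ⟨by omega, hfb.succ_mem_right hsh hT hi hB⟩⟩
  have hcol : ∀ r', updateBox t r (c + 1) ((t r (c + 1)).erase i) r' c = t r' c :=
    fun r' => updateBox_of_col_ne (by omega)
  unfold moveEntry
  rw [← hcol r]
  refine hT₁.updateBox_insert subset_rfl (hT.lt_of_mem hi) ⟨by omega, hin⟩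
    ?_ ?_ ?_ ?_
  · rintro c' rfl x hx
    rw [updateBox_of_col_ne (by omega)] at hx
    exact (hT.rowWeak r c' x i hx hi).trans (Nat.le_succ i)
  · intro y hy
    rw [updateBox_same, Finset.mem_erase] at hy
    have := hT.rowWeak r c i y hi hy.2
    omega
  · rintro r' rfl x hx
    rw [hcol] at hx
    exact (hT.colStrict r' c x i hx hi).trans (Nat.lt_succ_self i)
  · intro y hy
    rw [hcol] at hy
    have := hT.colStrict r c i y hi hy
    have : y ≠ i + 1 := fun h => hfb.succ_not_mem hsh hT (r + 1) (h ▸ hy)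
    omega

end fStep

section fSpec

variable {n : ℕ} {lam : ℕ → ℕ} {t : Filling} {i r c : ℕ}

theorem fRaw_spec_of_not_mem_right (hT : IsSVT n lam t) (hsh : IsPartitionShape n lam)
    (hfb : fBoxCol n (lam 0) t i c) (hin : i < n) (hi : i ∈ t r c) (hA : i ∉ t r (c + 1)) :
    IsSVT n lam (swapEntry t r c i (i + 1)) ∧
      eRaw n lam i (swapEntry t r c i (i + 1)) = some t ∧
      pctr (signWord n (lam 0) (swapEntry t r c i (i + 1)) i) + 1 =
        pctr (signWord n (lam 0) t i) ∧
      mctr (signWord n (lam 0) (swapEntry t r c i (i + 1)) i) =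
        mctr (signWord n (lam 0) t i) + 1 := by
  set t' := swapEntry t r c i (i + 1) with ht'
  have hT' : IsSVT n lam t' := hT.swapEntry_of_fBoxCol hsh hfb hin hi hA
  have hr := hT.row_lt hsh hi
  have hmem : i + 1 ∈ t' r c := by simp [t', swapEntry]
  have hσ' : colSign n t' i c = some false := by
    refine colSign_eq_some_false.mpr ⟨⟨r, hr, hmem⟩, fun h => ?_⟩
    have := (colHas_updateBox_same hr fun r' hr' h' => hr' (hT.row_eq_of_mem hsh h' hi)).mp h
    simp at this
  obtain ⟨hbefore, hafter⟩ := signSeg_eq_of_eq_off (σ := colSign n t i) (σ' := colSign n t' i)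
    (N := lam 0) fun c' h => colSign_updateBox_of_ne h
  have hact := fBoxCol_iff.mp hfb
  have heb : eBoxCol n (lam 0) t' i c := eBoxCol_iff.mpr (hact.congr hact.1 hσ' hbefore hafter)
  refine ⟨hT', ?_, hact.flip_counts hact.1 hσ' hbefore hafter⟩
  rw [eRaw_of_eBoxCol hsh hT' heb hmem, if_neg, swapEntry_swapEntry hi (hfb.succ_not_mem hsh hT r)]
  rintro ⟨hc, h⟩
  rw [ht', swapEntry, updateBox_of_col_ne (by omega)] at h
  have := hT.rowWeak r (c - 1) (i + 1) i h (by rwa [Nat.sub_add_cancel hc])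
  omega

theorem fRaw_spec_of_mem_right (hT : IsSVT n lam t) (hsh : IsPartitionShape n lam)
    (hfb : fBoxCol n (lam 0) t i c) (hin : i < n) (hi : i ∈ t r c) (hB : i ∈ t r (c + 1)) :
    IsSVT n lam (moveEntry t r c i (c + 1) (i + 1)) ∧
      eRaw n lam i (moveEntry t r c i (c + 1) (i + 1)) = some t ∧
      pctr (signWord n (lam 0) (moveEntry t r c i (c + 1) (i + 1)) i) + 1 =
        pctr (signWord n (lam 0) t i) ∧
      mctr (signWord n (lam 0) (moveEntry t r c i (c + 1) (i + 1)) i) =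
        mctr (signWord n (lam 0) t i) + 1 := by
  set t' := moveEntry t r c i (c + 1) (i + 1) with ht'
  have hT' : IsSVT n lam t' := hT.moveEntry_of_fBoxCol hsh hfb hin hi hB
  have hr := hT.row_lt hsh hi
  have hB' := hfb.succ_mem_right hsh hT hi hB
  have hc : c + 1 < lam 0 := (hT.lt_of_mem hB).trans_le (hsh.antitone (Nat.zero_le r))
  have hmem : i + 1 ∈ t' r (c + 1) := by
    simp [t', moveEntry, updateBox_of_col_ne (show c + 1 ≠ c by omega), hB']
  have hσ : colSign n t i (c + 1) = none :=
    colSign_eq_none (iff_of_true ⟨r, hr, hB⟩ ⟨r, hr, hB'⟩)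
  have hσ' : colSign n t' i c = none := by
    refine colSign_eq_none (iff_of_true ⟨r, hr, ?_⟩ ⟨r, hr, ?_⟩) <;>
      simp [t', moveEntry, hi]
  have hσ'₁ : colSign n t' i (c + 1) = some false := by
    rw [ht', moveEntry, colSign_updateBox_of_ne (by omega)]
    refine colSign_eq_some_false.mpr
      ⟨⟨r, hr, by simpa [t', moveEntry, updateBox_of_col_ne] using hmem⟩, fun h => ?_⟩
    have := (colHas_updateBox_same hr fun r' hr' h' => hr' (hT.row_eq_of_mem hsh h' hB)).mp h
    simp at this
  have hoff : ∀ c', c' ≠ c → c' ≠ c + 1 → colSign n t' i c' = colSign n t i c' :=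
    fun c' h₁ h₂ => by
      rw [ht', moveEntry, colSign_updateBox_of_ne h₁, colSign_updateBox_of_ne h₂]
  obtain ⟨hbefore, hafter⟩ := signSeg_eq_of_shift hc hoff hσ hσ'
  have hact := fBoxCol_iff.mp hfb
  have heb : eBoxCol n (lam 0) t' i (c + 1) :=
    eBoxCol_iff.mpr (hact.congr hc hσ'₁ hbefore hafter)
  refine ⟨hT', ?_, hact.flip_counts hc hσ'₁ hbefore hafter⟩
  rw [eRaw_of_eBoxCol hsh hT' heb hmem, if_pos ⟨c.succ_pos, by simp [t', moveEntry]⟩,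
    Nat.add_sub_cancel, moveEntry_moveEntry (by omega) hB (hfb.succ_not_mem hsh hT r)]

theorem fRaw_eq_some_cases (hT : IsSVT n lam t) (hsh : IsPartitionShape n lam) {t' : Filling}
    (h : fRaw n lam i t = some t') : ∃ c r, fBoxCol n (lam 0) t i c ∧ i ∈ t r c ∧
      (i ∈ t r (c + 1) ∧ t' = moveEntry t r c i (c + 1) (i + 1) ∨
        i ∉ t r (c + 1) ∧ t' = swapEntry t r c i (i + 1)) := by
  obtain ⟨c, hfb⟩ : ∃ c, fBoxCol n (lam 0) t i c := by
    by_contra hno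
    rw [fRaw_eq_none hno] at h
    cases h
  obtain ⟨r, -, hi⟩ := (colSign_eq_some_true.mp hfb.1.2.1).1
  rw [fRaw_of_fBoxCol hsh hT hfb hi] at h
  split_ifs at h with hB <;> cases h
  exacts [⟨c, r, hfb, hi, .inl ⟨hB, rfl⟩⟩, ⟨c, r, hfb, hi, .inr ⟨hB, rfl⟩⟩]

theorem fRaw_spec (hT : IsSVT n lam t) (hsh : IsPartitionShape n lam) (hin : i < n) {t' : Filling}
    (h : fRaw n lam i t = some t') :
    IsSVT n lam t' ∧ eRaw n lam i t' = some t ∧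
      pctr (signWord n (lam 0) t' i) + 1 = pctr (signWord n (lam 0) t i) ∧
      mctr (signWord n (lam 0) t' i) = mctr (signWord n (lam 0) t i) + 1 := by
  obtain ⟨c, r, hfb, hi, ⟨hB, rfl⟩ | ⟨hB, rfl⟩⟩ := fRaw_eq_some_cases hT hsh h
  exacts [fRaw_spec_of_mem_right hT hsh hfb hin hi hB,
    fRaw_spec_of_not_mem_right hT hsh hfb hin hi hB]

theorem fRaw_eq_none_iff (hT : IsSVT n lam t) (hsh : IsPartitionShape n lam) :
    fRaw n lam i t = none ↔ pctr (signWord n (lam 0) t i) = 0 := by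
  constructor
  · intro h
    by_contra hpos
    obtain ⟨c, hc⟩ := exists_isActive_true_iff.mpr (Nat.pos_of_ne_zero hpos)
    have hfb := fBoxCol_iff.mpr hc
    obtain ⟨r, -, hi⟩ := (colSign_eq_some_true.mp hc.2.1).1
    rw [fRaw_of_fBoxCol hsh hT hfb hi] at h
    split_ifs at h
  · intro h
    refine fRaw_eq_none fun ⟨c, hfb⟩ => ?_
    exact (exists_isActive_true_iff.mp ⟨c, fBoxCol_iff.mp hfb⟩).ne' h

end fSpec

/-! ### The operator `e_i` -/

section eStep

variable {n : ℕ} {lam : ℕ → ℕ} {t : Filling} {i r c : ℕ}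

theorem eBoxCol.not_mem (heb : eBoxCol n (lam 0) t i c) (hsh : IsPartitionShape n lam)
    (hT : IsSVT n lam t) (r' : ℕ) : i ∉ t r' c :=
  hT.not_mem_of_not_colHas hsh (colSign_eq_some_false.mp heb.1.2.1).2 r'

/-- Otherwise column `c` would carry an unpaired `−` to the left of `c + 1`. -/
theorem eBoxCol.mem_left (heb : eBoxCol n (lam 0) t i (c + 1)) (hsh : IsPartitionShape n lam)
    (hT : IsSVT n lam t) (hi : i + 1 ∈ t r (c + 1)) (hprev : i + 1 ∈ t r c) : i ∈ t r c := by
  have hr := hT.row_lt hsh hi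
  obtain ⟨r₂, -, h₂⟩ : colHas n t i c := by
    by_contra hno
    have hminus : colSign n t i c = some false :=
      colSign_eq_some_false.mpr ⟨⟨r, hr, hprev⟩, hno⟩
    have hpctr : pctr (signSeg (colSign n t i) (c + 1) (lam 0)) = 0 := by
      rw [signSeg_split_of_eq_some _ le_rfl heb.1.1 heb.1.2.1, signSeg_of_le _ le_rfl]
      exact pctr_append_false_cons [] heb.1.2.2
    have := heb.2 c ⟨by have := heb.1.1; omega, hminus, hpctr⟩
    omega
  rcases lt_trichotomy r₂ r with h | rfl | h
  · obtain ⟨b, hb⟩ := hT.boxNonempty r₂ (c + 1)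
      ((hT.lt_of_mem hi).trans_le (hsh.antitone h.le))
    have h₃ := hT.rowWeak r₂ c i b h₂ hb
    have h₄ := hT.lt_of_row_lt hsh h hb hi
    have hb' : b = i := by omega
    exact absurd (hb' ▸ hb) (heb.not_mem hsh hT r₂)
  · exact h₂
  · exact absurd (hT.lt_of_row_lt hsh h hprev h₂) (by omega)

theorem IsSVT.swapEntry_of_eBoxCol (hT : IsSVT n lam t) (hsh : IsPartitionShape n lam)
    (heb : eBoxCol n (lam 0) t i c) (hi1 : 1 ≤ i) (hi : i + 1 ∈ t r c)
    (hA : ∀ c', c' + 1 = c → i + 1 ∉ t r c') : IsSVT n lam (swapEntry t r c (i + 1) i) := by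
  refine hT.updateBox_insert (Finset.erase_subset _ _) (hT.lt_of_mem hi)
    ⟨hi1, by have := (hT.entryBounds r c _ hi).2; omega⟩ ?_ ?_ ?_ ?_
  · rintro c' rfl x hx
    have := hT.rowWeak r c' x (i + 1) hx hi
    have : x ≠ i + 1 := fun h => hA c' rfl (h ▸ hx)
    omega
  · intro y hy
    exact (Nat.le_succ i).trans (hT.rowWeak r c (i + 1) y hi hy)
  · rintro r' rfl x hx
    have := hT.colStrict r' c x (i + 1) hx hi
    have : x ≠ i := fun h => heb.not_mem hsh hT r' (h ▸ hx)
    omega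
  · intro y hy
    exact (Nat.lt_succ_self i).trans (hT.colStrict r c (i + 1) y hi hy)

theorem IsSVT.moveEntry_of_eBoxCol (hT : IsSVT n lam t) (hsh : IsPartitionShape n lam)
    (heb : eBoxCol n (lam 0) t i (c + 1)) (hi1 : 1 ≤ i) (hi : i + 1 ∈ t r (c + 1))
    (hprev : i + 1 ∈ t r c) : IsSVT n lam (moveEntry t r (c + 1) (i + 1) c i) := by
  have hT₁ : IsSVT n lam (updateBox t r c ((t r c).erase (i + 1))) :=
    hT.updateBox_of_subset (Finset.erase_subset _ _)
      ⟨i, Finset.mem_erase.mpr ⟨by omega, heb.mem_left hsh hT hi hprev⟩⟩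
  have hcol : ∀ r' c', c' ≠ c → updateBox t r c ((t r c).erase (i + 1)) r' c' = t r' c' :=
    fun r' c' h => updateBox_of_col_ne h
  unfold moveEntry
  rw [← hcol r (c + 1) (by omega)]
  refine hT₁.updateBox_insert subset_rfl (hT.lt_of_mem hi)
    ⟨hi1, by have := (hT.entryBounds r _ _ hi).2; omega⟩ ?_ ?_ ?_ ?_
  · intro c' hc' x hx
    obtain rfl : c' = c := by omega
    rw [updateBox_same, Finset.mem_erase] at hx
    have := hT.rowWeak r c' x (i + 1) hx.2 hi
    omega
  · intro y hy
    rw [hcol _ _ (by omega)] at hy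
    exact (Nat.le_succ i).trans (hT.rowWeak r (c + 1) (i + 1) y hi hy)
  · rintro r' rfl x hx
    rw [hcol _ _ (by omega)] at hx
    have := hT.colStrict r' (c + 1) x (i + 1) hx hi
    have : x ≠ i := fun h => heb.not_mem hsh hT r' (h ▸ hx)
    omega
  · intro y hy
    rw [hcol _ _ (by omega)] at hy
    exact (Nat.lt_succ_self i).trans (hT.colStrict r (c + 1) (i + 1) y hi hy)

theorem eRaw_spec_of_not_mem_left (hT : IsSVT n lam t) (hsh : IsPartitionShape n lam)
    (heb : eBoxCol n (lam 0) t i c) (hi1 : 1 ≤ i) (hi : i + 1 ∈ t r c)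
    (hA : ¬ (0 < c ∧ i + 1 ∈ t r (c - 1))) :
    IsSVT n lam (swapEntry t r c (i + 1) i) ∧
      fRaw n lam i (swapEntry t r c (i + 1) i) = some t := by
  set t' := swapEntry t r c (i + 1) i with ht'
  have hT' : IsSVT n lam t' := hT.swapEntry_of_eBoxCol hsh heb hi1 hi fun c' hc' h =>
    hA ⟨by omega, by rwa [← hc', Nat.add_sub_cancel]⟩
  have hr := hT.row_lt hsh hi
  have hmem : i ∈ t' r c := by simp [t', swapEntry]
  have hσ' : colSign n t' i c = some true := by
    refine colSign_eq_some_true.mpr ⟨⟨r, hr, hmem⟩, fun h => ?_⟩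
    have := (colHas_updateBox_same hr fun r' hr' h' => hr' (hT.row_eq_of_mem hsh h' hi)).mp h
    simp at this
  obtain ⟨hbefore, hafter⟩ := signSeg_eq_of_eq_off (σ := colSign n t i) (σ' := colSign n t' i)
    (N := lam 0) fun c' h => colSign_updateBox_of_ne h
  have hact := eBoxCol_iff.mp heb
  have hfb : fBoxCol n (lam 0) t' i c := fBoxCol_iff.mpr (hact.congr hact.1 hσ' hbefore hafter)
  refine ⟨hT', ?_⟩
  rw [fRaw_of_fBoxCol hsh hT' hfb hmem, if_neg, swapEntry_swapEntry hi (heb.not_mem hsh hT r)]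
  rw [ht', swapEntry, updateBox_of_col_ne (by omega)]
  intro h
  have := hT.rowWeak r c (i + 1) i hi h
  omega

theorem eRaw_spec_of_mem_left (hT : IsSVT n lam t) (hsh : IsPartitionShape n lam)
    (heb : eBoxCol n (lam 0) t i (c + 1)) (hi1 : 1 ≤ i) (hi : i + 1 ∈ t r (c + 1))
    (hprev : i + 1 ∈ t r c) :
    IsSVT n lam (moveEntry t r (c + 1) (i + 1) c i) ∧
      fRaw n lam i (moveEntry t r (c + 1) (i + 1) c i) = some t := by
  set t' := moveEntry t r (c + 1) (i + 1) c i with ht'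
  have hT' : IsSVT n lam t' := hT.moveEntry_of_eBoxCol hsh heb hi1 hi hprev
  have hr := hT.row_lt hsh hi
  have hprev' := heb.mem_left hsh hT hi hprev
  have hmem : i ∈ t' r c := by
    simp [t', moveEntry, updateBox_of_col_ne (show c ≠ c + 1 by omega), hprev']
  have hσ : colSign n t i c = none :=
    colSign_eq_none (iff_of_true ⟨r, hr, hprev'⟩ ⟨r, hr, hprev⟩)
  have hσ' : colSign n t' i (c + 1) = none := by
    refine colSign_eq_none (iff_of_true ⟨r, hr, ?_⟩ ⟨r, hr, ?_⟩) <;>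
      simp [t', moveEntry, hi]
  have hσ'₀ : colSign n t' i c = some true := by
    rw [ht', moveEntry, colSign_updateBox_of_ne (by omega)]
    refine colSign_eq_some_true.mpr
      ⟨⟨r, hr, by simpa [t', moveEntry, updateBox_of_col_ne] using hmem⟩, fun h => ?_⟩
    have := (colHas_updateBox_same hr fun r' hr' h' => hr' (hT.row_eq_of_mem hsh h' hprev)).mp h
    simp at this
  have hoff : ∀ c', c' ≠ c → c' ≠ c + 1 → colSign n t i c' = colSign n t' i c' :=
    fun c' h₁ h₂ => by
      rw [ht', moveEntry, colSign_updateBox_of_ne h₂, colSign_updateBox_of_ne h₁]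
  obtain ⟨hbefore, hafter⟩ := signSeg_eq_of_shift heb.1.1 hoff hσ' hσ
  have hfb : fBoxCol n (lam 0) t' i c :=
    fBoxCol_iff.mpr ((eBoxCol_iff.mp heb).congr (Nat.lt_of_succ_lt heb.1.1) hσ'₀ hbefore.symm
      hafter.symm)
  refine ⟨hT', ?_⟩
  rw [fRaw_of_fBoxCol hsh hT' hfb hmem, if_pos (by simp [t', moveEntry]),
    moveEntry_moveEntry (by omega) hprev (heb.not_mem hsh hT r)]

end eStep

section eSpec

variable {n : ℕ} {lam : ℕ → ℕ} {t : Filling} {i : ℕ}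

theorem eRaw_spec (hT : IsSVT n lam t) (hsh : IsPartitionShape n lam) (hi1 : 1 ≤ i) {t' : Filling}
    (h : eRaw n lam i t = some t') : IsSVT n lam t' ∧ fRaw n lam i t' = some t := by
  obtain ⟨c, heb⟩ : ∃ c, eBoxCol n (lam 0) t i c := by
    by_contra hno
    rw [eRaw_eq_none hno] at h
    cases h
  obtain ⟨r, -, hi⟩ := (colSign_eq_some_false.mp heb.1.2.1).1
  rw [eRaw_of_eBoxCol hsh hT heb hi] at h
  split_ifs at h with hB <;> cases h
  · obtain ⟨hc, hprev⟩ := hB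
    obtain ⟨c, rfl⟩ := Nat.exists_eq_add_one_of_ne_zero hc.ne'
    exact eRaw_spec_of_mem_left hT hsh heb hi1 hi hprev
  · exact eRaw_spec_of_not_mem_left hT hsh heb hi1 hi hB

theorem eRaw_eq_none_iff (hT : IsSVT n lam t) (hsh : IsPartitionShape n lam) :
    eRaw n lam i t = none ↔ mctr (signWord n (lam 0) t i) = 0 := by
  constructor
  · intro h
    by_contra hpos
    obtain ⟨c, hc⟩ := exists_isActive_false_iff.mpr (Nat.pos_of_ne_zero hpos)
    obtain ⟨r, -, hi⟩ := (colSign_eq_some_false.mp hc.2.1).1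
    rw [eRaw_of_eBoxCol hsh hT (eBoxCol_iff.mpr hc) hi] at h
    split_ifs at h
  · intro h
    refine eRaw_eq_none fun ⟨c, heb⟩ => ?_
    exact (exists_isActive_false_iff.mp ⟨c, eBoxCol_iff.mp heb⟩).ne' h

end eSpec

/-! ### Weights and string lengths -/

section wt

variable {n : ℕ} {lam : ℕ → ℕ} {t : Filling} {r c : ℕ}

theorem wt_updateBox (hr : r < n) (hc : c < lam 0) (A : Finset ℕ) (j : ℕ) :
    wt n lam (updateBox t r c A) j + (if j ∈ t r c then 1 else 0) =
      wt n lam t j + (if j ∈ A then 1 else 0) := by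
  have hmem : (r, c) ∈ Finset.range n ×ˢ Finset.range (lam 0) := by simp [hr, hc]
  simp only [wt, Finset.card_filter]
  rw [← Finset.add_sum_erase _ _ hmem, ← Finset.add_sum_erase _ _ hmem,
    Finset.sum_congr rfl fun p hp => by
      rw [updateBox_of_ne fun h => (Finset.mem_erase.mp hp).1 (Prod.ext h.1 h.2)]]
  simp only [updateBox_same]
  omega

theorem wt_swapEntry (hr : r < n) (hc : c < lam 0) {a b : ℕ} (ha : a ∈ t r c) (hb : b ∉ t r c)
    (j : ℕ) : wt n lam (swapEntry t r c a b) j + (if j = a then 1 else 0) =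
      wt n lam t j + (if j = b then 1 else 0) := by
  have := wt_updateBox (t := t) (lam := lam) hr hc (insert b ((t r c).erase a)) j
  have hab : a ≠ b := fun h => hb (h ▸ ha)
  by_cases hja : j = a <;> by_cases hjb : j = b <;> simp_all [swapEntry]

theorem wt_moveEntry (hr : r < n) {c' : ℕ} (hc : c < lam 0) (hc' : c' < lam 0) (hcc : c ≠ c')
    {a b : ℕ} (hab : a ≠ b) (ha : a ∈ t r c') (hb : b ∉ t r c) (j : ℕ) :
    wt n lam (moveEntry t r c a c' b) j + (if j = a then 1 else 0) =
      wt n lam t j + (if j = b then 1 else 0) := by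
  have h₁ := wt_updateBox (t := t) (lam := lam) hr hc' ((t r c').erase a) j
  have h₂ := wt_updateBox (t := updateBox t r c' ((t r c').erase a)) (lam := lam) hr hc
    (insert b (t r c)) j
  rw [updateBox_of_col_ne hcc] at h₂
  by_cases hja : j = a <;> by_cases hjb : j = b <;> simp_all [moveEntry]

end wt

theorem wt_fRaw {n : ℕ} {lam : ℕ → ℕ} {t t' : Filling} {i : ℕ} (hT : IsSVT n lam t)
    (hsh : IsPartitionShape n lam) (h : fRaw n lam i t = some t') (j : ℕ) :
    wt n lam t' j + (if j = i then 1 else 0) = wt n lam t j + (if j = i + 1 then 1 else 0) := by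
  obtain ⟨c, r, hfb, hi, ⟨hB, rfl⟩ | ⟨-, rfl⟩⟩ := fRaw_eq_some_cases hT hsh h
  · exact wt_moveEntry (hT.row_lt hsh hi) hfb.1.1
      ((hT.lt_of_mem hB).trans_le (hsh.antitone (Nat.zero_le r))) (by omega) (by omega) hB
      (hfb.succ_not_mem hsh hT r) j
  · exact wt_swapEntry (hT.row_lt hsh hi) hfb.1.1 hi (hfb.succ_not_mem hsh hT r) j

theorem IsSVT.wt_eq_card_colHas {n : ℕ} {lam : ℕ → ℕ} {t : Filling} (hT : IsSVT n lam t)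
    (hsh : IsPartitionShape n lam) (j : ℕ) :
    wt n lam t j = ((Finset.range (lam 0)).filter (fun c => colHas n t j c)).card := by
  unfold wt
  apply Finset.card_bij (fun p _ => p.2)
  · intro p hp
    simp only [Finset.mem_filter, Finset.mem_product, Finset.mem_range] at hp ⊢
    exact ⟨hp.1.2, p.1, hp.1.1, hp.2⟩
  · intro p hp q hq h
    simp only [Finset.mem_filter] at hp hq
    exact Prod.ext (hT.row_eq_of_mem hsh hp.2 (h ▸ hq.2)) h
  · intro c hc
    rw [Finset.mem_filter, Finset.mem_range] at hc
    obtain ⟨hc, r, hr, h⟩ := hc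
    exact ⟨(r, c), by simp [hr, hc, h], rfl⟩

theorem pctr_signWord_eq {n : ℕ} {lam : ℕ → ℕ} {t : Filling} (hT : IsSVT n lam t)
    (hsh : IsPartitionShape n lam) (i : ℕ) :
    (pctr (signWord n (lam 0) t i) : ℤ) =
      mctr (signWord n (lam 0) t i) + wt n lam t i - wt n lam t (i + 1) := by
  have hsign := pctr_add_count_false (signWord n (lam 0) t i)
  rw [count_signSeg, count_signSeg] at hsign
  rw [hT.wt_eq_card_colHas hsh, hT.wt_eq_card_colHas hsh,
    ← Finset.card_filter_add_card_filter_not (p := fun c => colHas n t (i + 1) c),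
    ← Finset.card_filter_add_card_filter_not (s := Finset.filter _ (Finset.range (lam 0)))
      (p := fun c => colHas n t i c)]
  simp only [Finset.filter_filter, colSign_eq_some_true, colSign_eq_some_false] at hsign ⊢
  rw [Finset.filter_congr fun c _ => and_comm (a := colHas n t (i + 1) c)]
  push_cast
  omega

theorem iterOpt_succ' (g : Filling → Option Filling) (m : ℕ) (u : Filling) :
    iterOpt g (m + 1) u = (g u).bind (iterOpt g m) := by
  induction m with
  | zero => simp [iterOpt]
  | succ m ih => rw [iterOpt, ih, Option.bind_assoc]; rfl

theorem iterOpt_ne_none_iff {g : Filling → Option Filling} {P : Filling → Prop}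
    (μ : Filling → ℕ) (hnone : ∀ u, P u → (g u = none ↔ μ u = 0))
    (hstep : ∀ u v, P u → g u = some v → P v ∧ μ v + 1 = μ u) (m : ℕ) {u : Filling}
    (hu : P u) :
    iterOpt g m u ≠ none ↔ m ≤ μ u := by
  induction m generalizing u with
  | zero => simp [iterOpt]
  | succ m ih =>
    rw [iterOpt_succ']
    obtain h | ⟨v, h⟩ := Option.eq_none_or_eq_some (g u)
    · simp [h, (hnone u hu).mp h]
    · obtain ⟨hv, hμ⟩ := hstep u v hu h
      rw [h, Option.bind_some, ih hv]
      omega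

section strings

variable {n : ℕ} {lam : ℕ → ℕ} {t : Filling} {i : ℕ}

theorem iterOpt_fRaw_ne_none_iff (hT : IsSVT n lam t) (hsh : IsPartitionShape n lam) (hin : i < n)
    (m : ℕ) : iterOpt (fRaw n lam i) m t ≠ none ↔ m ≤ pctr (signWord n (lam 0) t i) :=
  iterOpt_ne_none_iff (P := IsSVT n lam) (fun u => pctr (signWord n (lam 0) u i))
    (fun _ hu => fRaw_eq_none_iff hu hsh)
    (fun _ _ hu h => ⟨(fRaw_spec hu hsh hin h).1, (fRaw_spec hu hsh hin h).2.2.1⟩) m hT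

theorem iterOpt_eRaw_ne_none_iff (hT : IsSVT n lam t) (hsh : IsPartitionShape n lam) (hi1 : 1 ≤ i)
    (hin : i < n) (m : ℕ) :
    iterOpt (eRaw n lam i) m t ≠ none ↔ m ≤ mctr (signWord n (lam 0) t i) := by
  refine iterOpt_ne_none_iff (P := IsSVT n lam) (fun u => mctr (signWord n (lam 0) u i))
    (fun _ hu => eRaw_eq_none_iff hu hsh) (fun u v hu h => ?_) m hT
  obtain ⟨hv, hf⟩ := eRaw_spec hu hsh hi1 h
  exact ⟨hv, by have := (fRaw_spec hv hsh hin hf).2.2.2; omega⟩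

end strings

/-- `SVT^n(λ)` with `e_i`, `f_i` and `wt` is an abstract
`U_q(sl_n)`-crystal: (1) `f_i T = T' ↔ e_i T' = T`; (2) applying `f_i` changes the weight
by `-α_i`; (3) `ε_i` and `φ_i` are finite and `φ_i(T) = ε_i(T) + wt(T)_i - wt(T)_{i+1}`. -/
theorem svt_abstract_crystal (n : ℕ) (lam : ℕ → ℕ) (hlam : IsPartitionShape n lam)
    (i : ℕ) (hi1 : 1 ≤ i) (hin : i < n) :
    (∀ t t' : Filling, IsSVT n lam t → IsSVT n lam t' →
      (fRaw n lam i t = some t' ↔ eRaw n lam i t' = some t)) ∧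
    (∀ t t' : Filling, IsSVT n lam t → fRaw n lam i t = some t' →
      wt n lam t' i + 1 = wt n lam t i ∧
      wt n lam t' (i + 1) = wt n lam t (i + 1) + 1 ∧
      ∀ j, j ≠ i → j ≠ i + 1 → wt n lam t' j = wt n lam t j) ∧
    (∀ t : Filling, IsSVT n lam t → ∃ E F : ℕ,
      (∀ m, iterOpt (eRaw n lam i) m t ≠ none ↔ m ≤ E) ∧
      (∀ m, iterOpt (fRaw n lam i) m t ≠ none ↔ m ≤ F) ∧
      (F : ℤ) = (E : ℤ) + (wt n lam t i : ℤ) - (wt n lam t (i + 1) : ℤ)) := by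
  refine ⟨fun t t' hT hT' => ⟨fun h => (fRaw_spec hT hlam hin h).2.1,
    fun h => (eRaw_spec hT' hlam hi1 h).2⟩, fun t t' hT h => ?_, fun t hT => ?_⟩
  · have hwt := wt_fRaw hT hlam h
    exact ⟨by simpa using hwt i, by simpa using hwt (i + 1),
      fun j hj₁ hj₂ => by simpa [hj₁, hj₂] using hwt j⟩
  · exact ⟨_, _, iterOpt_eRaw_ne_none_iff hT hlam hi1 hin, iterOpt_fRaw_ne_none_iff hT hlam hin,
      pctr_signWord_eq hT hlam i⟩

end SVTCrystal

end
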